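/- With g ∈ SU(1,1) as above and W_g := (αU + β)(β̄U + ᾱ)^{−1}, the operator W_g is an isometry: W_g* W_g = I. Moreover the kernel of W_g* is one-dimensional, spanned by the unit vector F₀ = Σ_{k≥0} (−β̄)^k / (ᾱ)^{k+1} E_k = (ᾱ + β̄U)^{−1} E₀. -/

import Mathlib

/-!
Write `T = β̄U + ᾱ`, `P = αU + β` and `F = V E₀`. Since `U*U = I`, expanding gives `P*P = T*T`,
hence `(PV)*(PV) = (TV)*(TV) = I`. Read coordinatewise, `T F = E₀` says `ᾱ F₀ = 1` and
`ᾱ F_{n+1} + β̄ F_n = 0`; the latter recurrence is also exactly the equation `P* x = 0`. So `F` is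
the geometric sequence of the statement, and `ker (PV)* = ker P*` (as `V*` has the left inverse
`T*`) is the line through `F`. Summing `|ᾱ F_{n+1}|² = |β̄ F_n|²` over `n` gives
`(|α|² - |β|²) ‖F‖² = |ᾱ F₀|² = 1`.
-/

open scoped ENNReal ComplexConjugate InnerProductSpace

noncomputable section

abbrev H : Type := lp (fun _ : ℕ => ℂ) 2

def e (k : ℕ) : H := lp.single 2 k 1

section StarAlgebra

variable {A : Type*} [Ring A] [StarRing A] [Algebra ℂ A] [StarModule ℂ A]

-- The two sides differ by `(|α|² - |β|²) (u* u - 1)`.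
theorem star_mul_self_smul_add_eq_of_star_mul_self {u : A} (hu : star u * u = 1) (α β : ℂ) :
    star (α • u + β • (1 : A)) * (α • u + β • 1) =
      star (conj β • u + conj α • (1 : A)) * (conj β • u + conj α • 1) := by
  simp only [star_add, star_smul, star_one, add_mul, mul_add, smul_mul_assoc, mul_smul_comm,
    hu, mul_one, one_mul, Complex.star_def, Complex.conj_conj]
  module

end StarAlgebra

theorem star_mul_mul_self_eq_one {A : Type*} [Monoid A] [StarMul A] {p t v : A}
    (hpt : star p * p = star t * t) (htv : t * v = 1) : star (p * v) * (p * v) = 1 := by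
  calc star (p * v) * (p * v) = star v * (star p * p) * v := by simp only [star_mul, mul_assoc]
    _ = star (t * v) * (t * v) := by simp only [hpt, star_mul, mul_assoc]
    _ = 1 := by rw [htv, star_one, one_mul]

theorem eq_mul_pow_of_recurrence {K : Type*} [Field K] {a b : K} (ha : a ≠ 0) {x : ℕ → K}
    (hx : ∀ n, a * x (n + 1) + b * x n = 0) (n : ℕ) : x n = x 0 * (-b / a) ^ n := by
  induction n with
  | zero => simp
  | succ n ih =>
    rw [pow_succ, ← mul_assoc, ← ih, mul_div, eq_div_iff ha]
    linear_combination hx n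

section lp

variable {𝕜 : Type*} [NormedField 𝕜]

theorem lp.mem_span_singleton_of_recurrence {p : ℝ≥0∞} [Fact (1 ≤ p)] {a b : 𝕜} (ha : a ≠ 0)
    {x y : lp (fun _ : ℕ => 𝕜) p} (hx : ∀ n, a * x (n + 1) + b * x n = 0)
    (hy : ∀ n, a * y (n + 1) + b * y n = 0) (hy₀ : y 0 ≠ 0) : x ∈ Submodule.span 𝕜 {y} := by
  refine Submodule.mem_span_singleton.mpr ⟨x 0 / y 0, lp.ext (funext fun n => ?_)⟩
  rw [lp.coeFn_smul, Pi.smul_apply, smul_eq_mul, eq_mul_pow_of_recurrence ha hx n,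
    eq_mul_pow_of_recurrence ha hy n]
  field_simp

theorem lp.hasSum_norm_sq (x : lp (fun _ : ℕ => 𝕜) 2) : HasSum (fun n => ‖x n‖ ^ 2) (‖x‖ ^ 2) := by
  simpa only [ENNReal.toReal_ofNat, Real.rpow_two] using lp.hasSum_norm (p := 2) (by norm_num) x

theorem lp.norm_sq_mul_of_recurrence {a b : 𝕜} {x : lp (fun _ : ℕ => 𝕜) 2}
    (hx : ∀ n, a * x (n + 1) + b * x n = 0) :
    (‖a‖ ^ 2 - ‖b‖ ^ 2) * ‖x‖ ^ 2 = ‖a * x 0‖ ^ 2 := by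
  have hsum := lp.hasSum_norm_sq x
  have htail : HasSum (fun n => ‖a‖ ^ 2 * ‖x (n + 1)‖ ^ 2) (‖a‖ ^ 2 * (‖x‖ ^ 2 - ‖x 0‖ ^ 2)) := by
    simpa using ((hasSum_nat_add_iff' 1).mpr hsum).mul_left (‖a‖ ^ 2)
  have hshift : (fun n => ‖a‖ ^ 2 * ‖x (n + 1)‖ ^ 2) = fun n => ‖b‖ ^ 2 * ‖x n‖ ^ 2 := by
    funext n
    have h : ‖a * x (n + 1)‖ = ‖b * x n‖ := by
      rw [eq_neg_of_add_eq_zero_left (hx n)]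
      exact _root_.norm_neg _
    rw [← mul_pow, ← mul_pow, ← norm_mul, ← norm_mul, h]
  rw [hshift] at htail
  rw [norm_mul, mul_pow]
  linear_combination htail.unique (hsum.mul_left _)

end lp

theorem inner_e_left (v : H) (n : ℕ) : ⟪e n, v⟫_ℂ = v n := by
  simp [e, lp.inner_single_left, RCLike.inner_apply]

theorem e_apply (k n : ℕ) : e k n = if n = k then 1 else 0 := by
  simp [e, Pi.single_apply]

theorem tsum_apply_smul_e (x : H) : ∑' k, x k • e k = x := by
  refine HasSum.tsum_eq ?_
  convert lp.hasSum_single ENNReal.ofNat_ne_top x using 2 with k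
  rw [e, ← lp.single_smul, smul_eq_mul, mul_one]

theorem star_apply_apply (A : H →L[ℂ] H) (v : H) (n : ℕ) : (star A v) n = ⟪A (e n), v⟫_ℂ := by
  rw [ContinuousLinearMap.star_eq_adjoint, ← ContinuousLinearMap.adjoint_inner_right, inner_e_left]

section Shift

variable {U : H →L[ℂ] H} (hU : ∀ k, U (e k) = e (k + 1))
include hU

theorem star_shift_apply (v : H) (n : ℕ) : (star U v) n = v (n + 1) := by
  rw [star_apply_apply, hU, inner_e_left]

theorem star_shift_e_zero : star U (e 0) = 0 := by
  ext n
  simp [star_shift_apply hU, e_apply]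

theorem star_shift_e_succ (n : ℕ) : star U (e (n + 1)) = e n := by
  ext m
  simp [star_shift_apply hU, e_apply]

theorem shift_apply_zero (x : H) : U x 0 = 0 := by
  rw [← inner_e_left, ← ContinuousLinearMap.adjoint_inner_left,
    ← ContinuousLinearMap.star_eq_adjoint, star_shift_e_zero hU, inner_zero_left]

theorem shift_apply_succ (x : H) (n : ℕ) : U x (n + 1) = x n := by
  rw [← inner_e_left, ← ContinuousLinearMap.adjoint_inner_left,
    ← ContinuousLinearMap.star_eq_adjoint, star_shift_e_succ hU, inner_e_left]

theorem star_shift_mul_self : star U * U = 1 := by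
  ext x n
  exact (star_shift_apply hU _ n).trans (shift_apply_succ hU x n)

variable (a b : ℂ) (x : H)

theorem smul_shift_add_apply_zero : (a • U + b • 1) x 0 = b * x 0 := by
  change a * U x 0 + b * x 0 = b * x 0
  rw [shift_apply_zero hU, mul_zero, zero_add]

theorem smul_shift_add_apply_succ (n : ℕ) :
    (a • U + b • 1) x (n + 1) = a * x n + b * x (n + 1) := by
  change a * U x (n + 1) + b * x (n + 1) = _
  rw [shift_apply_succ hU]

theorem star_smul_shift_add_apply (n : ℕ) :
    (star (a • U + b • 1) x) n = conj a * x (n + 1) + conj b * x n := by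
  rw [star_apply_apply]
  simp only [add_apply, smul_apply, hU, one_apply_eq_self, inner_add_left, inner_smul_left,
    inner_e_left]

theorem star_smul_shift_add_eq_zero_iff :
    star (a • U + b • 1) x = 0 ↔ ∀ n, conj a * x (n + 1) + conj b * x n = 0 := by
  simp_rw [← star_smul_shift_add_apply hU]
  exact ⟨fun h n => by rw [h]; rfl, fun h => lp.ext (funext h)⟩

theorem ker_star_smul_shift_add_eq_span {a b : ℂ} (ha : a ≠ 0) {y : H}
    (hy : star (a • U + b • 1) y = 0) (hy₀ : y 0 ≠ 0) :
    LinearMap.ker ((star (a • U + b • 1) : H →L[ℂ] H) : H →ₗ[ℂ] H) = Submodule.span ℂ {y} := by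
  have hrec := (star_smul_shift_add_eq_zero_iff hU a b y).mp hy
  apply le_antisymm
  · intro x hx
    exact lp.mem_span_singleton_of_recurrence ((map_ne_zero _).mpr ha)
      ((star_smul_shift_add_eq_zero_iff hU a b x).mp hx) hrec hy₀
  · rwa [Submodule.span_le, Set.singleton_subset_iff]

end Shift

theorem ContinuousLinearMap.ker_mul_of_mul_eq_one {R M : Type*} [Semiring R] [AddCommMonoid M]
    [Module R M] [TopologicalSpace M] {a b c : M →L[R] M} (hca : c * a = 1) :
    LinearMap.ker ((a * b : M →L[R] M) : M →ₗ[R] M) = LinearMap.ker (b : M →ₗ[R] M) := by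
  ext x
  rw [LinearMap.mem_ker, LinearMap.mem_ker, coe_coe, coe_coe, mul_apply_eq_comp]
  refine ⟨fun h => ?_, fun h => by rw [h, map_zero]⟩
  rw [← one_apply_eq_self (F := M →L[R] M) (b x), ← hca, mul_apply_eq_comp, h, map_zero]

/-- For `g ∈ SU(1,1)` and `W_g = (αU + β)(β̄U + ᾱ)⁻¹`: `W_g` is an isometry,
`W_g* W_g = I`, and the kernel of `W_g*` is one-dimensional, spanned by the unit
vector `F₀ = ∑_k (-β̄)^k / ᾱ^{k+1} E_k = (ᾱ + β̄U)⁻¹ E₀`. -/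
theorem stmt18 (U : H →L[ℂ] H) (hU : ∀ k : ℕ, U (e k) = e (k + 1))
    (α β : ℂ) (hg : ‖α‖ ^ 2 - ‖β‖ ^ 2 = 1)
    (V : H →L[ℂ] H)
    (hV1 : (conj β • U + conj α • (1 : H →L[ℂ] H)) * V = 1)
    (hV2 : V * (conj β • U + conj α • (1 : H →L[ℂ] H)) = 1) :
    star ((α • U + β • (1 : H →L[ℂ] H)) * V) * ((α • U + β • (1 : H →L[ℂ] H)) * V) = 1 ∧
    V (e 0) = ∑' k : ℕ, ((-(conj β)) ^ k / (conj α) ^ (k + 1)) • e k ∧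
    ‖V (e 0)‖ = 1 ∧
    LinearMap.ker ((star ((α • U + β • (1 : H →L[ℂ] H)) * V) : H →L[ℂ] H) : H →ₗ[ℂ] H) =
      Submodule.span ℂ {V (e 0)} := by
  set F := V (e 0)
  have hTF : (conj β • U + conj α • (1 : H →L[ℂ] H)) F = e 0 := by
    rw [← mul_apply_eq_comp, hV1, one_apply_eq_self]
  have hF₀ : conj α * F 0 = 1 := by
    rw [← smul_shift_add_apply_zero hU (conj β), hTF, e_apply, if_pos rfl]
  have hrec (n : ℕ) : conj α * F (n + 1) + conj β * F n = 0 := by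
    rw [add_comm, ← smul_shift_add_apply_succ hU, hTF, e_apply, if_neg n.succ_ne_zero]
  have hα : conj α ≠ 0 := left_ne_zero_of_mul_eq_one hF₀
  refine ⟨star_mul_mul_self_eq_one
    (star_mul_self_smul_add_eq_of_star_mul_self (star_shift_mul_self hU) α β) hV1, ?_, ?_, ?_⟩
  · conv_lhs => rw [← tsum_apply_smul_e F]
    congr! 2 with k
    rw [eq_mul_pow_of_recurrence hα hrec k, eq_inv_of_mul_eq_one_right hF₀,
      div_pow, pow_succ, ← div_div, inv_mul_eq_div, div_right_comm]
  · have hnorm := lp.norm_sq_mul_of_recurrence hrec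
    rw [hF₀, Complex.norm_conj, Complex.norm_conj, hg, one_mul, norm_one, one_pow] at hnorm
    exact (pow_eq_one_iff_of_nonneg (norm_nonneg F) two_ne_zero).mp hnorm
  · rw [star_mul, ContinuousLinearMap.ker_mul_of_mul_eq_one (c := star _)
      (by rw [← star_mul, hV2, star_one])]
    have hFker : star (α • U + β • (1 : H →L[ℂ] H)) F = 0 :=
      (star_smul_shift_add_eq_zero_iff hU α β F).mpr hrec
    exact ker_star_smul_shift_add_eq_span hU ((map_ne_zero _).mp hα) hFker
      (right_ne_zero_of_mul_eq_one hF₀)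

end
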